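/- For every n ≥ 2 and every field F, the restriction of the Lie module Lie_F(n) to the subgroup 𝔖_{n−1} ≤ 𝔖_n is isomorphic to the regular F𝔖_{n−1}-module; i.e., F𝔖_n·ω_n is free of rank 1 as an F𝔖_{n−1}-module. -/

import Mathlib

/-!
Write `c := (Fin.cycleRange i)⁻¹`, so that `c 0 = i`, and `ω := dsw F n`. The map
`x ↦ x * c * ω` from `F[Stab i]` to `F𝔖_n * ω` commutes with the left action of `Stab i`.

It is injective because `ω - 1` is supported on permutations moving `0`: the coefficient of
`x * c * ω` at `τ * c` (with `τ ∈ Stab i`) is just the coefficient of `x` at `τ`.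

It is onto because, reading a permutation `g` as the word `g 0, g 1, …, g (n - 1)` in the free
associative algebra, `g * ω` becomes the left-normed Lie bracket `⁅⋯⁅g 0, g 1⁆, …, g (n - 1)⁆`.
By antisymmetry and the Jacobi identity such a bracket is a combination of left-normed brackets
of rearranged words starting with the letter `i`, i.e. of the images of `τ * ω` with `τ 0 = i`.
Reading words is injective on `F𝔖_n`, so `g * ω` lies in the span of these `τ * ω`, and
`τ = σ * c` with `σ = τ * c⁻¹ ∈ Stab i`.
-/

/-- The partial Dynkin–Specht–Wever element `(1-c_2)(1-c_3)⋯(1-c_m)` inside `F𝔖_n`,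
where `c_k` is the backward cycle `(k, k-1, …, 2, 1)` of `𝔖_n` (in zero-based indexing,
`c_k` is the inverse of `Fin.cycleRange (k-1)`). -/
noncomputable def dswPartial (F : Type*) [Field F] (n m : ℕ) :
    MonoidAlgebra F (Equiv.Perm (Fin n)) :=
  (((List.finRange n).take m).tail.map
    (fun j => (1 : MonoidAlgebra F (Equiv.Perm (Fin n))) -
      MonoidAlgebra.of F (Equiv.Perm (Fin n)) (Fin.cycleRange j)⁻¹)).prod

/-- The Dynkin–Specht–Wever element `ω_n = (1-c_2)(1-c_3)⋯(1-c_n) ∈ F𝔖_n`; `ω_1 = 1`. -/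
noncomputable def dsw (F : Type*) [Field F] (n : ℕ) :
    MonoidAlgebra F (Equiv.Perm (Fin n)) :=
  dswPartial F n n

section LeftNormed

variable {R L ι : Type*} [CommRing R] [LieRing L] [LieAlgebra R L]

def leftNormedLie (p : L) (l : List L) : L := l.foldl (fun q a => ⁅q, a⁆) p

@[simp] lemma leftNormedLie_nil (p : L) : leftNormedLie p [] = p := rfl

@[simp] lemma leftNormedLie_cons (p a : L) (l : List L) :
    leftNormedLie p (a :: l) = leftNormedLie ⁅p, a⁆ l := rfl

@[simp] lemma leftNormedLie_concat (p a : L) (l : List L) :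
    leftNormedLie p (l ++ [a]) = ⁅leftNormedLie p l, a⁆ := by
  simp [leftNormedLie]

def lieWord (x : ι → L) : List ι → L
  | [] => 0
  | a :: w => leftNormedLie (x a) (w.map x)

lemma lieWord_concat (x : ι → L) {w : List ι} (hw : w ≠ []) (b : ι) :
    lieWord x (w ++ [b]) = ⁅lieWord x w, x b⁆ := by
  obtain ⟨a, w, rfl⟩ := List.exists_cons_of_ne_nil hw
  simp [lieWord]

variable (R) in
def lieWordSpan (x : ι → L) (b : ι) (w : List ι) : Submodule R L :=
  Submodule.span R ((fun l => lieWord x (b :: l)) '' {l | l.Perm w})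

namespace lieWordSpan

variable {x : ι → L} {b : ι}

lemma congr_perm {w w' : List ι} (h : w.Perm w') :
    lieWordSpan R x b w = lieWordSpan R x b w' := by
  unfold lieWordSpan
  congr 2
  ext l
  exact ⟨fun hl => hl.trans h, fun hl => hl.trans h.symm⟩

lemma lieWord_mem (w : List ι) : lieWord x (b :: w) ∈ lieWordSpan R x b w :=
  Submodule.subset_span ⟨w, List.Perm.refl w, rfl⟩

lemma lie_mem {w : List ι} {z : L} (hz : z ∈ lieWordSpan R x b w) (a : ι) :
    ⁅z, x a⁆ ∈ lieWordSpan R x b (w ++ [a]) := by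
  induction hz using Submodule.span_induction with
  | mem z hz =>
    obtain ⟨l, hl, rfl⟩ := hz
    rw [← lieWord_concat x (List.cons_ne_nil b l)]
    exact Submodule.subset_span ⟨l ++ [a], hl.append_right [a], rfl⟩
  | zero => simp
  | add y z _ _ hy hz => rw [add_lie]; exact add_mem hy hz
  | smul r z _ hz => rw [smul_lie]; exact Submodule.smul_mem _ r hz

lemma leftNormedLie_mem {w : List ι} {z : L} (hz : z ∈ lieWordSpan R x b w) (v : List ι) :
    leftNormedLie z (v.map x) ∈ lieWordSpan R x b (w ++ v) := by
  induction v generalizing w z with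
  | nil => simpa using hz
  | cons a v ih => simpa using ih (lie_mem hz a)

/-- The Leibniz rule moves a bracket with a left-normed bracket into left-normed form. -/
lemma lie_leftNormedLie_mem (w : List ι) (p : ι) (l : List ι) :
    ⁅lieWord x (b :: l), leftNormedLie (x p) (w.map x)⁆ ∈ lieWordSpan R x b (l ++ p :: w) := by
  induction w using List.reverseRecOn generalizing l with
  | nil =>
    rw [List.map_nil, leftNormedLie_nil, ← lieWord_concat x (List.cons_ne_nil b l)]
    exact lieWord_mem (l ++ [p])
  | append_singleton w a ih =>
    have hY : ⁅lieWord x (b :: l), x a⁆ = lieWord x (b :: (l ++ [a])) :=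
      (lieWord_concat x (List.cons_ne_nil b l) a).symm
    have hleib : ⁅lieWord x (b :: l), leftNormedLie (x p) ((w ++ [a]).map x)⁆ =
        ⁅⁅lieWord x (b :: l), leftNormedLie (x p) (w.map x)⁆, x a⁆ -
          ⁅⁅lieWord x (b :: l), x a⁆, leftNormedLie (x p) (w.map x)⁆ := by
      rw [List.map_append, List.map_singleton, leftNormedLie_concat, leibniz_lie, sub_eq_add_neg,
        lie_skew]
    rw [hleib, hY]
    refine sub_mem ?_ ?_
    · simpa using lie_mem (ih l) a
    · rw [congr_perm (by simpa using (List.perm_append_singleton a (p :: w)).append_left l :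
        (l ++ p :: (w ++ [a])).Perm ((l ++ [a]) ++ p :: w))]
      exact ih (l ++ [a])

lemma lieWord_cons_append_cons_mem (a : ι) (u v : List ι) :
    lieWord x (a :: (u ++ b :: v)) ∈ lieWordSpan R x b (a :: (u ++ v)) := by
  have h : lieWord x (a :: (u ++ b :: v)) =
      leftNormedLie (-⁅lieWord x [b], leftNormedLie (x a) (u.map x)⁆) (v.map x) := by
    simp [lieWord, leftNormedLie, List.foldl_append, lie_skew]
  rw [h]
  have hmem := lie_leftNormedLie_mem (R := R) (x := x) (b := b) u a []
  simpa using leftNormedLie_mem (neg_mem hmem) v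

end lieWordSpan

lemma lieWord_mem_span_lieWord_cons (x : ι → L) {b : ι} {w : List ι} (hb : b ∈ w) :
    lieWord x w ∈ Submodule.span R ((fun l => lieWord x (b :: l)) '' {l | (b :: l).Perm w}) := by
  suffices ∃ w₀, (b :: w₀).Perm w ∧ lieWord x w ∈ lieWordSpan R x b w₀ by
    obtain ⟨w₀, hw₀, hmem⟩ := this
    refine Submodule.span_mono (Set.image_mono fun l hl => ?_) hmem
    exact (hl.cons b).trans hw₀
  obtain ⟨a, w, rfl⟩ := List.exists_cons_of_ne_nil (List.ne_nil_of_mem hb)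
  rcases List.mem_cons.mp hb with rfl | hb
  · exact ⟨w, List.Perm.refl _, lieWordSpan.lieWord_mem w⟩
  · obtain ⟨u, v, rfl⟩ := List.append_of_mem hb
    refine ⟨a :: (u ++ v), ?_, lieWordSpan.lieWord_cons_append_cons_mem a u v⟩
    exact (List.Perm.swap a b _).trans (List.perm_middle.symm.cons a)

end LeftNormed

open Equiv

section

variable {n : ℕ}

lemma Fin.cycleRange_inv_zero [NeZero n] (i : Fin n) : (Fin.cycleRange i)⁻¹ 0 = i :=
  Fin.cycleRange_symm_zero i

lemma Fin.cycleRange_inv_of_gt [NeZero n] {i j : Fin n} (h : i < j) :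
    (Fin.cycleRange i)⁻¹ j = j := by
  rw [Perm.inv_eq_iff_eq, Fin.cycleRange_of_gt h]

lemma Fin.cycleRange_inv_succ (i : Fin (n + 1)) (j : Fin n) :
    (Fin.cycleRange i)⁻¹ j.succ = i.succAbove j :=
  Fin.cycleRange_symm_succ i j

lemma Fin.cycleRange_inv_apply_eq_self_iff [NeZero n] {i j : Fin n} :
    (Fin.cycleRange i)⁻¹ j = i ↔ j = 0 :=
  ⟨fun h => (Fin.cycleRange i)⁻¹.injective (h.trans (Fin.cycleRange_inv_zero i).symm),
    fun h => h ▸ Fin.cycleRange_inv_zero i⟩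

lemma List.Perm.exists_map_finRange_eq {l : List (Fin n)} (h : l.Perm (List.finRange n)) :
    ∃ τ : Equiv.Perm (Fin n), (List.finRange n).map τ = l := by
  have hlen : l.length = n := by simpa using h.length_eq
  have hnd : l.Nodup := h.nodup_iff.mpr (List.nodup_finRange n)
  let f : Fin n → Fin n := fun j => l[(j : ℕ)]
  have hf : Function.Injective f := fun a b hab => Fin.ext (hnd.getElem_inj_iff.mp hab)
  refine ⟨Equiv.ofBijective f (Finite.injective_iff_bijective.mp hf), ?_⟩
  exact List.ext_getElem (by simp [hlen]) fun j _ _ => by simp [f]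

lemma List.take_finRange_succ {m : ℕ} (hm : m < n) :
    (List.finRange n).take (m + 1) = (List.finRange n).take m ++ [⟨m, hm⟩] := by
  rw [List.take_add_one, List.getElem?_eq_getElem (by simpa using hm)]
  simp

end

open MonoidAlgebra
open scoped Pointwise

namespace MonoidAlgebra

variable {k G M : Type*} [Semiring k]

lemma of_mem_supported [MulOneClass G] {s : Set G} {g : G} (hg : g ∈ s) :
    of k G g ∈ supported k k s := by
  rw [supported_eq_span_single]
  exact Submodule.subset_span ⟨g, hg, rfl⟩

lemma mul_mem_supported [Mul G] {s t : Set G} {x y : k[G]} (hx : x ∈ supported k k s)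
    (hy : y ∈ supported k k t) : x * y ∈ supported k k (s * t) := by
  classical
  intro g hg
  obtain ⟨a, ha, b, hb, rfl⟩ := Finset.mem_mul.mp (support_coeff_mul_subset x y hg)
  exact Set.mul_mem_mul (hx ha) (hy hb)

lemma eqOn_supported [MulOneClass G] [AddCommMonoid M] [Module k M] {s : Set G}
    {φ ψ : k[G] →ₗ[k] M} (h : ∀ g ∈ s, φ (of k G g) = ψ (of k G g)) :
    Set.EqOn φ ψ (supported k k s) := by
  rw [supported_eq_span_single]
  refine LinearMap.eqOn_span' ?_
  rintro _ ⟨g, hg, rfl⟩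
  exact h g hg

end MonoidAlgebra

section DynkinSpechtWever

variable (F : Type*) [Field F] {N : ℕ}

lemma dswPartial_one (n : ℕ) : dswPartial F n 1 = 1 := by
  rcases n with _ | n <;> simp [dswPartial, List.finRange_succ]

lemma dswPartial_succ {n m : ℕ} (h1 : 1 ≤ m) (hm : m < n) :
    dswPartial F n (m + 1) =
      dswPartial F n m * (1 - of F (Perm (Fin n)) (Fin.cycleRange ⟨m, hm⟩)⁻¹) := by
  have hne : (List.finRange n).take m ≠ [] := by
    simp only [ne_eq, List.take_eq_nil_iff, List.finRange_eq_nil_iff, not_or]; omega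
  simp [dswPartial, List.take_finRange_succ hm, List.tail_append_of_ne_nil hne]

variable (N) in
def movesZeroFixingFrom (m : ℕ) : Set (Perm (Fin (N + 1))) :=
  {g | (∀ j : Fin (N + 1), m ≤ j → g j = j) ∧ g 0 ≠ 0}

lemma dswPartial_sub_one_mem_supported {m : ℕ} (h1 : 1 ≤ m) (hm : m ≤ N + 1) :
    dswPartial F (N + 1) m - 1 ∈ supported F F (movesZeroFixingFrom N m) := by
  induction m, h1 using Nat.le_induction with
  | base => simp [dswPartial_one]
  | succ m h1 ih =>
    have hm' : m < N + 1 := by omega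
    set c := (Fin.cycleRange (⟨m, hm'⟩ : Fin (N + 1)))⁻¹
    have hc0 : c 0 ≠ 0 := by
      rw [Fin.cycleRange_inv_zero]; exact Fin.ne_of_val_ne (Nat.pos_iff_ne_zero.mp h1)
    have hc : ∀ j : Fin (N + 1), m + 1 ≤ j → c j = j := fun j hj =>
      Fin.cycleRange_inv_of_gt (Fin.lt_def.mpr (show m < (j : ℕ) by omega))
    have hmono : supported F F (movesZeroFixingFrom N m)
        ≤ supported F F (movesZeroFixingFrom N (m + 1)) :=
      supported_mono fun g hg => ⟨fun j hj => hg.1 j (by omega), hg.2⟩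
    have hmul : movesZeroFixingFrom N m * {c} ⊆ movesZeroFixingFrom N (m + 1) := by
      rw [Set.mul_subset_iff]
      rintro g ⟨hg, -⟩ _ rfl
      refine ⟨fun j hj => by rw [Perm.mul_apply, hc j hj, hg j (by omega)], ?_⟩
      rw [Perm.mul_apply, Fin.cycleRange_inv_zero, hg _ le_rfl]
      exact Fin.ne_of_val_ne (Nat.pos_iff_ne_zero.mp h1)
    have hrec : dswPartial F (N + 1) (m + 1) - 1 =
        (dswPartial F (N + 1) m - 1) - of F _ c - (dswPartial F (N + 1) m - 1) * of F _ c := by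
      rw [dswPartial_succ F h1 hm']; noncomm_ring
    rw [hrec]
    refine sub_mem (sub_mem (hmono (ih hm'.le)) (of_mem_supported ⟨hc, hc0⟩)) ?_
    exact supported_mono hmul (mul_mem_supported (ih hm'.le) (of_mem_supported rfl))

lemma dswPartial_mem_supported {m : ℕ} (h1 : 1 ≤ m) (hm : m ≤ N + 1) :
    dswPartial F (N + 1) m ∈ supported F F
      {g : Perm (Fin (N + 1)) | ∀ j : Fin (N + 1), m ≤ j → g j = j} := by
  rw [← sub_add_cancel (dswPartial F (N + 1) m) 1, ← map_one (of F (Perm (Fin (N + 1))))]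
  exact add_mem (supported_mono (fun _ hg => hg.1) (dswPartial_sub_one_mem_supported F h1 hm))
    (of_mem_supported fun _ _ => rfl)

end DynkinSpechtWever

attribute [local instance] LieRing.ofAssociativeRing

section Prefix

variable {n : ℕ}

def permPrefix (m : ℕ) (g : Perm (Fin n)) : List (Fin n) :=
  ((List.finRange n).take m).map g

lemma permPrefix_self (g : Perm (Fin n)) : permPrefix n g = (List.finRange n).map g := by
  rw [permPrefix, List.take_of_length_le (by simp)]

lemma permPrefix_succ {m : ℕ} (hm : m < n) (g : Perm (Fin n)) :
    permPrefix (m + 1) g = permPrefix m g ++ [g ⟨m, hm⟩] := by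
  simp [permPrefix, List.take_finRange_succ hm]

lemma permPrefix_succ_mul_cycleRange_inv {m : ℕ} (hm : m < n + 1) (g : Perm (Fin (n + 1))) :
    permPrefix (m + 1) (g * (Fin.cycleRange ⟨m, hm⟩)⁻¹) = g ⟨m, hm⟩ :: permPrefix m g := by
  refine List.ext_getElem ?_ fun j h₁ _ => ?_
  · simp only [permPrefix, List.length_map, List.length_take, List.length_finRange,
      List.length_cons]
    omega
  rcases j with _ | j
  · simp [permPrefix]
  · simp only [permPrefix, List.length_map, List.length_take, List.length_finRange] at h₁
    have hj : (⟨j + 1, by omega⟩ : Fin (n + 1)) = (⟨j, by omega⟩ : Fin n).succ := rfl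
    simp only [permPrefix, List.getElem_map, List.getElem_take, List.getElem_finRange,
      List.getElem_cons_succ, Perm.mul_apply, Fin.cast_mk, hj, Fin.cycleRange_inv_succ]
    rw [Fin.succAbove_of_castSucc_lt (⟨m, hm⟩ : Fin (n + 1)) ⟨j, by omega⟩
      (Fin.lt_def.mpr (show j < m by omega))]
    rfl

variable (F : Type*) [Field F]

noncomputable def prefixMap (n m : ℕ) :
    MonoidAlgebra F (Perm (Fin n)) →ₗ[F] MonoidAlgebra F (FreeMonoid (Fin n)) :=
  mapDomainLinearMap F F fun g => FreeMonoid.ofList (permPrefix m g)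

noncomputable abbrev letter (j : Fin n) : MonoidAlgebra F (FreeMonoid (Fin n)) :=
  of F (FreeMonoid (Fin n)) (FreeMonoid.of j)

lemma prefixMap_of (m : ℕ) (g : Perm (Fin n)) :
    prefixMap F n m (of F _ g) = of F _ (FreeMonoid.ofList (permPrefix m g)) := by
  simp [prefixMap]

lemma prefixMap_injective : Function.Injective (prefixMap F n n) := by
  refine mapDomain_injective fun g h hgh => Equiv.ext fun j => ?_
  rw [FreeMonoid.ofList.injective.eq_iff, permPrefix_self, permPrefix_self,
    List.map_inj_left] at hgh
  exact hgh j (List.mem_finRange j)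

lemma prefixMap_succ_of_mul {m : ℕ} (hm : m < n) (g : Perm (Fin n))
    {f : MonoidAlgebra F (Perm (Fin n))} (hf : f ∈ supported F F {s | s ⟨m, hm⟩ = ⟨m, hm⟩}) :
    prefixMap F n (m + 1) (of F _ g * f) =
      prefixMap F n m (of F _ g * f) * letter F (g ⟨m, hm⟩) := by
  refine eqOn_supported (φ := prefixMap F n (m + 1) ∘ₗ LinearMap.mulLeft F (of F _ g))
    (ψ := LinearMap.mulRight F (letter F (g ⟨m, hm⟩)) ∘ₗ prefixMap F n m ∘ₗ
      LinearMap.mulLeft F (of F _ g)) (fun s (hs : s ⟨m, hm⟩ = ⟨m, hm⟩) => ?_) hf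
  simp only [LinearMap.comp_apply, LinearMap.mulLeft_apply, LinearMap.mulRight_apply, ← map_mul,
    prefixMap_of, permPrefix_succ hm, FreeMonoid.ofList_append, FreeMonoid.ofList_singleton,
    Perm.mul_apply, hs]

lemma prefixMap_succ_of_mul_mul_cycleRange_inv {m : ℕ} (hm : m < n + 1) (g : Perm (Fin (n + 1)))
    {f : MonoidAlgebra F (Perm (Fin (n + 1)))}
    (hf : f ∈ supported F F {s | s ⟨m, hm⟩ = ⟨m, hm⟩}) :
    prefixMap F (n + 1) (m + 1) (of F _ g * f * of F _ (Fin.cycleRange ⟨m, hm⟩)⁻¹) =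
      letter F (g ⟨m, hm⟩) * prefixMap F (n + 1) m (of F _ g * f) := by
  refine eqOn_supported (φ := prefixMap F (n + 1) (m + 1) ∘ₗ
      LinearMap.mulRight F (of F _ (Fin.cycleRange ⟨m, hm⟩)⁻¹) ∘ₗ LinearMap.mulLeft F (of F _ g))
    (ψ := LinearMap.mulLeft F (letter F (g ⟨m, hm⟩)) ∘ₗ prefixMap F (n + 1) m ∘ₗ
      LinearMap.mulLeft F (of F _ g)) (fun s (hs : s ⟨m, hm⟩ = ⟨m, hm⟩) => ?_) hf
  simp only [LinearMap.comp_apply, LinearMap.mulLeft_apply, LinearMap.mulRight_apply, ← map_mul,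
    prefixMap_of, permPrefix_succ_mul_cycleRange_inv, ← FreeMonoid.ofList_singleton,
    ← FreeMonoid.ofList_append, List.singleton_append, Perm.mul_apply, hs]

theorem prefixMap_of_mul_dswPartial {N m : ℕ} (h1 : 1 ≤ m) (hm : m ≤ N + 1)
    (g : Perm (Fin (N + 1))) :
    prefixMap F (N + 1) m (of F _ g * dswPartial F (N + 1) m) =
      lieWord (letter F) (permPrefix m g) := by
  induction m, h1 using Nat.le_induction with
  | base =>
    rw [dswPartial_one, mul_one, prefixMap_of, permPrefix_succ (Nat.succ_pos N)]
    simp [permPrefix, lieWord]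
  | succ m h1 ih =>
    have hm' : m < N + 1 := by omega
    have hf : dswPartial F (N + 1) m ∈ supported F F {s | s ⟨m, hm'⟩ = ⟨m, hm'⟩} := by
      refine supported_mono ?_ (dswPartial_mem_supported F h1 hm'.le)
      exact fun _ hs => hs _ le_rfl
    have hne : permPrefix m g ≠ [] := List.ne_nil_of_length_pos <| by
      simp only [permPrefix, List.length_map, List.length_take, List.length_finRange]; omega
    rw [dswPartial_succ F h1 hm', mul_sub, mul_one, mul_sub, ← mul_assoc, map_sub,
      prefixMap_succ_of_mul F hm' g hf, prefixMap_succ_of_mul_mul_cycleRange_inv F hm' g hf,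
      ih hm'.le, permPrefix_succ hm', lieWord_concat _ hne, Ring.lie_def]

end Prefix

section Restriction

variable {F : Type*} [Field F] {N : ℕ}

variable (F) in
noncomputable def stabilizerToLie (i : Fin (N + 1)) :
    MonoidAlgebra F (MulAction.stabilizer (Perm (Fin (N + 1))) i) →ₗ[F]
      MonoidAlgebra F (Perm (Fin (N + 1))) :=
  LinearMap.mulRight F (of F _ (Fin.cycleRange i)⁻¹ * dsw F (N + 1)) ∘ₗ
    (mapDomainAlgHom F F (MulAction.stabilizer (Perm (Fin (N + 1))) i).subtype).toLinearMap

lemma stabilizerToLie_apply (i : Fin (N + 1))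
    (x : MonoidAlgebra F (MulAction.stabilizer (Perm (Fin (N + 1))) i)) :
    stabilizerToLie F i x =
      mapDomainAlgHom F F (MulAction.stabilizer (Perm (Fin (N + 1))) i).subtype x *
        (of F _ (Fin.cycleRange i)⁻¹ * dsw F (N + 1)) :=
  rfl

lemma stabilizerToLie_of_mul (i : Fin (N + 1)) (h : MulAction.stabilizer (Perm (Fin (N + 1))) i)
    (x : MonoidAlgebra F (MulAction.stabilizer (Perm (Fin (N + 1))) i)) :
    stabilizerToLie F i (of F _ h * x) =
      of F _ (h : Perm (Fin (N + 1))) * stabilizerToLie F i x := by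
  rw [stabilizerToLie_apply, stabilizerToLie_apply, map_mul, mul_assoc]
  simp

lemma mapDomainAlgHom_stabilizer_mem_supported (i : Fin (N + 1))
    (x : MonoidAlgebra F (MulAction.stabilizer (Perm (Fin (N + 1))) i)) :
    mapDomainAlgHom F F (MulAction.stabilizer (Perm (Fin (N + 1))) i).subtype x ∈
      supported F F {g | g i = i} := by
  induction x using MonoidAlgebra.induction_on with
  | of σ => simpa using of_mem_supported (k := F) (s := {g : Perm (Fin (N + 1)) | g i = i}) σ.2
  | add x y hx hy => rw [map_add]; exact add_mem hx hy
  | smul r x hx => rw [map_smul]; exact Submodule.smul_mem _ r hx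

lemma mul_cycleRange_inv_mul_apply_zero_ne {i : Fin (N + 1)} {k b : Perm (Fin (N + 1))}
    (hk : k i = i) (hb : b 0 ≠ 0) : (k * (Fin.cycleRange i)⁻¹ * b) 0 ≠ i := by
  intro h
  apply hb
  rw [← Fin.cycleRange_inv_apply_eq_self_iff (i := i)]
  exact k.injective (h.trans hk.symm)

/-- `dsw F (N + 1) - 1` only involves permutations moving `0`, so it does not contribute to the
coefficients at permutations sending `0` to `i`. -/
lemma coeff_stabilizerToLie (i : Fin (N + 1))
    (x : MonoidAlgebra F (MulAction.stabilizer (Perm (Fin (N + 1))) i))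
    (τ : MulAction.stabilizer (Perm (Fin (N + 1))) i) :
    (stabilizerToLie F i x).coeff (τ * (Fin.cycleRange i)⁻¹) = x.coeff τ := by
  set y := mapDomainAlgHom F F (MulAction.stabilizer (Perm (Fin (N + 1))) i).subtype x *
    of F _ (Fin.cycleRange i)⁻¹ with hy_def
  have hsplit : stabilizerToLie F i x = y + y * (dsw F (N + 1) - 1) := by
    rw [stabilizerToLie_apply, ← mul_assoc]
    change y * dsw F (N + 1) = _
    noncomm_ring
  have hy : y.coeff (τ * (Fin.cycleRange i)⁻¹) = x.coeff τ := by
    rw [hy_def, of_apply, coeff_mul_single_apply, mul_inv_cancel_right, mul_one,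
      mapDomainAlgHom_apply, coeff_mapDomain]
    exact Finsupp.mapDomain_apply Subtype.val_injective _ τ
  have hrest : (y * (dsw F (N + 1) - 1)).coeff (τ * (Fin.cycleRange i)⁻¹) = 0 := by
    have hmem := mul_mem_supported
      (mul_mem_supported (mapDomainAlgHom_stabilizer_mem_supported i x)
        (of_mem_supported (Set.mem_singleton (Fin.cycleRange i)⁻¹)))
      (dswPartial_sub_one_mem_supported F (Nat.le_add_left 1 N) le_rfl)
    refine (mem_supported'.mp hmem) _ fun hτ => ?_
    obtain ⟨_, ⟨k, hk, _, rfl, rfl⟩, b, hb, heq⟩ := hτ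
    refine mul_cycleRange_inv_mul_apply_zero_ne hk hb.2 ?_
    change (k * (Fin.cycleRange i)⁻¹ * b) = τ * (Fin.cycleRange i)⁻¹ at heq
    rw [heq, Perm.mul_apply, Fin.cycleRange_inv_zero]
    exact τ.2
  rw [hsplit, coeff_add, Finsupp.add_apply, hy, hrest, add_zero]

lemma stabilizerToLie_injective (i : Fin (N + 1)) : Function.Injective (stabilizerToLie F i) := by
  refine (injective_iff_map_eq_zero _).mpr fun x hx => MonoidAlgebra.ext (Finsupp.ext fun τ => ?_)
  rw [← coeff_stabilizerToLie i x τ, hx]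
  rfl

lemma of_mul_dsw_mem_span (i : Fin (N + 1)) (g : Perm (Fin (N + 1))) :
    of F _ g * dsw F (N + 1) ∈
      Submodule.span F ((fun τ => of F _ τ * dsw F (N + 1)) '' {τ | τ 0 = i}) := by
  have hword (τ : Perm (Fin (N + 1))) : prefixMap F (N + 1) (N + 1) (of F _ τ * dsw F (N + 1)) =
      lieWord (letter F) ((List.finRange (N + 1)).map τ) := by
    rw [← permPrefix_self]
    exact prefixMap_of_mul_dswPartial F (Nat.le_add_left 1 N) le_rfl τ
  have hi : i ∈ (List.finRange (N + 1)).map g :=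
    List.mem_map.mpr ⟨g⁻¹ i, List.mem_finRange _, by simp⟩
  have hmem := lieWord_mem_span_lieWord_cons (R := F) (letter F) hi
  rw [← hword] at hmem
  have hle : Submodule.span F ((fun l => lieWord (letter F) (i :: l)) ''
      {l | (i :: l).Perm ((List.finRange (N + 1)).map g)}) ≤
      (Submodule.span F ((fun τ => of F _ τ * dsw F (N + 1)) '' {τ | τ 0 = i})).map
        (prefixMap F (N + 1) (N + 1)) := by
    rw [Submodule.map_span, ← Set.image_comp]
    refine Submodule.span_mono ?_
    rintro _ ⟨l, hl, rfl⟩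
    obtain ⟨τ, hτ⟩ := (hl.trans (Perm.map_finRange_perm g)).exists_map_finRange_eq
    refine ⟨τ, ?_, by rw [Function.comp_apply, hword, hτ]⟩
    simpa [List.finRange_succ] using congrArg List.head? hτ
  obtain ⟨y, hy, hPy⟩ := hle hmem
  rwa [← prefixMap_injective F hPy]

lemma range_stabilizerToLie (i : Fin (N + 1)) :
    LinearMap.range (stabilizerToLie F i) =
      (Submodule.span (MonoidAlgebra F (Perm (Fin (N + 1)))) {dsw F (N + 1)}).restrictScalars
        F := by
  refine le_antisymm ?_ fun y hy => ?_
  · rintro _ ⟨x, rfl⟩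
    rw [Submodule.restrictScalars_mem, stabilizerToLie_apply, ← mul_assoc, ← smul_eq_mul]
    exact Submodule.smul_mem _ _ (Submodule.mem_span_singleton_self _)
  obtain ⟨a, rfl⟩ := Submodule.mem_span_singleton.mp hy
  clear hy
  have hspan : Submodule.span F ((fun τ => of F _ τ * dsw F (N + 1)) '' {τ | τ 0 = i}) ≤
      LinearMap.range (stabilizerToLie F i) := by
    rw [Submodule.span_le]
    rintro _ ⟨τ, hτ, rfl⟩
    have hσ : τ * Fin.cycleRange i ∈ MulAction.stabilizer (Perm (Fin (N + 1))) i := by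
      rw [MulAction.mem_stabilizer_iff, Perm.smul_def, Perm.mul_apply, Fin.cycleRange_self, hτ]
    refine ⟨of F _ ⟨_, hσ⟩, ?_⟩
    simp [stabilizerToLie_apply, ← mul_assoc]
  induction a using MonoidAlgebra.induction_on with
  | of g => exact hspan (of_mul_dsw_mem_span i g)
  | add a b ha hb => rw [add_smul]; exact add_mem ha hb
  | smul r a ha => rw [smul_assoc]; exact Submodule.smul_mem _ r ha

end Restriction

theorem dsw_ideal_restriction_regular_general (F : Type*) [Field F] (n : ℕ) (i : Fin n) :
    ∃ e : MonoidAlgebra F ↥(MulAction.stabilizer (Equiv.Perm (Fin n)) i) ≃ₗ[F]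
        ↥((Submodule.span (MonoidAlgebra F (Equiv.Perm (Fin n))) {dsw F n}).restrictScalars F),
      ∀ (h : MulAction.stabilizer (Equiv.Perm (Fin n)) i)
        (x : MonoidAlgebra F ↥(MulAction.stabilizer (Equiv.Perm (Fin n)) i)),
        (e (MonoidAlgebra.of F ↥(MulAction.stabilizer (Equiv.Perm (Fin n)) i) h * x) :
            MonoidAlgebra F (Equiv.Perm (Fin n))) =
          MonoidAlgebra.of F (Equiv.Perm (Fin n)) (h : Equiv.Perm (Fin n)) *
            (e x : MonoidAlgebra F (Equiv.Perm (Fin n))) := by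
  obtain ⟨N, rfl⟩ : ∃ N, n = N + 1 := Nat.exists_eq_add_one.mpr i.pos
  exact ⟨(LinearEquiv.ofInjective _ (stabilizerToLie_injective i)).trans
    (LinearEquiv.ofEq _ _ (range_stabilizerToLie i)), stabilizerToLie_of_mul i⟩

/-- For every `n ≥ 2` and every field `F`, the restriction of the Lie module
`Lie_F(n) = F𝔖_n·ω_n` to the subgroup `𝔖_{n−1} ≤ 𝔖_n` (the stabilizer of the last
point) is isomorphic to the regular `F𝔖_{n−1}`-module: there is an `F`-linear
equivalence intertwining the `𝔖_{n-1}`-actions. -/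
theorem dsw_ideal_restriction_regular (F : Type*) [Field F] (n : ℕ) (hn : 2 ≤ n) (i : Fin n)
    (hi : (i : ℕ) = n - 1) :
    ∃ e : MonoidAlgebra F ↥(MulAction.stabilizer (Equiv.Perm (Fin n)) i) ≃ₗ[F]
        ↥((Submodule.span (MonoidAlgebra F (Equiv.Perm (Fin n))) {dsw F n}).restrictScalars F),
      ∀ (h : MulAction.stabilizer (Equiv.Perm (Fin n)) i)
        (x : MonoidAlgebra F ↥(MulAction.stabilizer (Equiv.Perm (Fin n)) i)),
        (e (MonoidAlgebra.of F ↥(MulAction.stabilizer (Equiv.Perm (Fin n)) i) h * x) :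
            MonoidAlgebra F (Equiv.Perm (Fin n))) =
          MonoidAlgebra.of F (Equiv.Perm (Fin n)) (h : Equiv.Perm (Fin n)) *
            (e x : MonoidAlgebra F (Equiv.Perm (Fin n))) :=
  dsw_ideal_restriction_regular_general F n i
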